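/- Let Φ : [0,∞)^n → [0,∞) satisfy conditions (A) and (B) and suppose d_Φ turns the product of any n length spaces into a length space. Then the restriction of Φ to each coordinate ray is continuous at 0, i.e. Φ(t eᵢ) → 0 as t → 0⁺ for each i. -/

import Mathlib

/-!
Take the i-th factor to be ℝ and all other factors {0}. The product is then a copy of the line
through `eᵢ`, with distance `Φ (|s - t| • eᵢ)`. If `Φ` stayed `≥ ε` on the ray near `0`, this
distance would be `ε`-separated, so every curve continuous for it would be locally constant and
could not join `0` to `eᵢ`, contradicting the length space property. Hence `Φ (a • eᵢ) < ε / 2`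
for some `a > 0`, and (B) for the triangle `(t, a, a)` gives
`Φ (t • eᵢ) ≤ 2 Φ (a • eᵢ)` for `0 < t < 2a`.
-/

/-- The set of partition sums of a curve `c : [0,1] → X` with respect to a
distance function `d`; its supremum is the length of the curve. -/
def partitionSums {X : Type*} (d : X → X → ℝ) (c : ℝ → X) : Set ℝ :=
  { s | ∃ (k : ℕ) (t : Fin (k + 1) → ℝ), Monotone t ∧ t 0 = 0 ∧ t (Fin.last k) = 1 ∧
      s = ∑ j : Fin k, d (c (t (Fin.castSucc j))) (c (t j.succ)) }

/-- `(X, d)` is a length (inner metric) space. -/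
def IsLengthSpaceWith {X : Type*} (d : X → X → ℝ) : Prop :=
  ∀ x y : X, ∀ ε > (0 : ℝ), ∃ c : ℝ → X, c 0 = x ∧ c 1 = y ∧
    (∀ t : ℝ, ∀ ε' > (0 : ℝ), ∃ δ > (0 : ℝ), ∀ s : ℝ, |s - t| < δ → d (c s) (c t) < ε') ∧
    (∀ S ∈ partitionSums d c, S ≤ d x y + ε)

open Set

theorem Fin.sum_succ_sub_castSucc {G : Type*} [AddCommGroup G] :
    ∀ {k : ℕ} (t : Fin (k + 1) → G), ∑ j : Fin k, (t j.succ - t j.castSucc) = t (Fin.last k) - t 0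
  | 0, t => by simp
  | k + 1, t => by
    rw [Fin.sum_univ_castSucc]
    simp only [Fin.succ_castSucc]
    rw [Fin.sum_succ_sub_castSucc (fun j => t j.castSucc), Fin.succ_last, Fin.castSucc_zero]
    abel

theorem IsLengthSpaceWith.of_lipschitzWith {X : Type*} [PseudoMetricSpace X]
    (h : ∀ x y : X, ∃ c : ℝ → X, c 0 = x ∧ c 1 = y ∧ LipschitzWith (nndist x y) c) :
    IsLengthSpaceWith (fun a b : X => dist a b) := by
  intro x y ε hε
  obtain ⟨c, hc0, hc1, hc⟩ := h x y
  refine ⟨c, hc0, hc1,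
    fun t => by simpa only [Real.dist_eq] using Metric.continuous_iff.1 hc.continuous t, ?_⟩
  rintro S ⟨k, t, ht, ht0, htk, rfl⟩
  calc ∑ j : Fin k, dist (c (t j.castSucc)) (c (t j.succ))
      ≤ ∑ j : Fin k, dist x y * (t j.succ - t j.castSucc) := by
        gcongr with j
        rw [← abs_of_nonneg (sub_nonneg.2 (ht (Fin.castSucc_le_succ j))), ← Real.dist_eq,
          dist_comm (t _)]
        exact hc.dist_le_mul _ _
    _ = dist x y := by rw [← Finset.mul_sum, Fin.sum_succ_sub_castSucc, htk, ht0, sub_zero, mul_one]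
    _ ≤ dist x y + ε := by linarith

theorem Convex.isLengthSpaceWith {E : Type*} [SeminormedAddCommGroup E] [NormedSpace ℝ E]
    {s : Set E} (hs : Convex ℝ s) : IsLengthSpaceWith (fun a b : s => dist a b) := by
  refine IsLengthSpaceWith.of_lipschitzWith fun x y => ?_
  refine ⟨fun r => ⟨AffineMap.lineMap (x : E) y (projIcc (0 : ℝ) 1 zero_le_one r : ℝ),
    hs.lineMap_mem x.2 y.2 (projIcc 0 1 zero_le_one r).2⟩, ?_, ?_, ?_⟩
  · ext; simp
  · ext; simp
  · refine LipschitzWith.of_dist_le_mul fun r r' => ?_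
    rw [Subtype.dist_eq, dist_lineMap_lineMap, mul_comm, coe_nndist, Subtype.dist_eq]
    gcongr
    simpa [Subtype.dist_eq] using (LipschitzWith.projIcc zero_le_one).dist_le_mul r r'

theorem IsLengthSpaceWith.subsingleton {X : Type*} {d : X → X → ℝ} (hd : IsLengthSpaceWith d)
    {ε : ℝ} (hε : 0 < ε) (hsep : ∀ x y, x ≠ y → ε ≤ d x y) : Subsingleton X := by
  refine ⟨fun x y => ?_⟩
  obtain ⟨c, rfl, rfl, hc, -⟩ := hd x y 1 one_pos
  have hloc : IsLocallyConstant c := (IsLocallyConstant.iff_eventually_eq c).2 fun t => by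
    obtain ⟨δ, hδ, hδc⟩ := hc t ε hε
    rw [Metric.eventually_nhds_iff]
    exact ⟨δ, hδ, fun s hs => not_not.1 fun hne =>
      (hδc s (by rwa [← Real.dist_eq])).not_ge (hsep _ _ hne)⟩
  exact hloc.apply_eq_of_preconnectedSpace 0 1

section Axis

variable {n : ℕ} (i : Fin n)

/-- The product over `j` of these sets is the `i`-th coordinate axis of `ℝⁿ`. -/
def axisFactor (j : Fin n) : Set ℝ := {x | j = i ∨ x = 0}

theorem convex_axisFactor (j : Fin n) : Convex ℝ (axisFactor i j) := by
  by_cases h : j = i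
  · simpa [axisFactor, h] using convex_univ
  · simp only [axisFactor, h, false_or, ofPred_eq_eq_singleton]
    exact convex_singleton 0

def axisPoint (t : ℝ) : ∀ j, axisFactor i j :=
  fun j => ⟨(Pi.single i t : Fin n → ℝ) j,
    (em (j = i)).imp_right fun h => Pi.single_eq_of_ne (M := fun _ => ℝ) h t⟩

variable {i}

theorem axisFactor_ext {p q : ∀ j, axisFactor i j} (h : p i = q i) : p = q := funext fun j => by
  by_cases hj : j = i
  · subst hj; exact h
  · exact Subtype.ext (((p j).2.resolve_left hj).trans ((q j).2.resolve_left hj).symm)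

theorem dist_axisFactor (p q : ∀ j, axisFactor i j) :
    (fun j => dist (p j) (q j)) = Pi.single i (dist (p i) (q i)) := by
  funext j
  by_cases h : j = i
  · subst h; simp
  · rw [Pi.single_eq_of_ne h, Subtype.dist_eq, (p j).2.resolve_left h, (q j).2.resolve_left h,
      dist_self]

end Axis

section Ray

variable {n : ℕ} {Φ : (Fin n → ℝ) → ℝ}

theorem map_single_le_add
    (hB : ∀ q1 q2 q3 : Fin n → ℝ, 0 ≤ q1 → 0 ≤ q2 → 0 ≤ q3 →
      q1 ≤ q2 + q3 → q2 ≤ q1 + q3 → q3 ≤ q1 + q2 → Φ q1 ≤ Φ q2 + Φ q3)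
    (i : Fin n) {t a b : ℝ} (ht : 0 ≤ t) (ha : 0 ≤ a) (hb : 0 ≤ b)
    (hab : t ≤ a + b) (htb : a ≤ t + b) (hta : b ≤ t + a) :
    Φ (Pi.single i t) ≤ Φ (Pi.single i a) + Φ (Pi.single i b) := by
  refine hB _ _ _ (Pi.single_nonneg.2 ht) (Pi.single_nonneg.2 ha) (Pi.single_nonneg.2 hb)
    ?_ ?_ ?_ <;> rw [← Pi.single_add] <;> exact Pi.single_le_single.2 ‹_›

theorem exists_pos_map_single_lt
    (hlen : ∀ (X : Fin n → Type) (_ : ∀ i, MetricSpace (X i)),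
      (∀ i, IsLengthSpaceWith (fun a b : X i => dist a b)) →
      IsLengthSpaceWith (fun x y : ∀ i, X i => Φ (fun i => dist (x i) (y i))))
    (i : Fin n) {ε : ℝ} (hε : 0 < ε) : ∃ a > 0, Φ (Pi.single i a) < ε := by
  by_contra! h
  have hprod := hlen (fun j => axisFactor i j) (fun _ => inferInstance)
    fun j => (convex_axisFactor i j).isLengthSpaceWith
  have hsub := hprod.subsingleton hε fun p q hpq => by
    rw [dist_axisFactor]
    exact h _ (dist_pos.2 fun hi => hpq (axisFactor_ext hi))
  have h01 := congrArg Subtype.val (congrFun (hsub.elim (axisPoint i 0) (axisPoint i 1)) i)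
  simp [axisPoint] at h01

end Ray

theorem stmt_12_general {n : ℕ} (Φ : (Fin n → ℝ) → ℝ)
    (hB : ∀ q1 q2 q3 : Fin n → ℝ, 0 ≤ q1 → 0 ≤ q2 → 0 ≤ q3 →
      q1 ≤ q2 + q3 → q2 ≤ q1 + q3 → q3 ≤ q1 + q2 →
      Φ q1 ≤ Φ q2 + Φ q3)
    (hlen : ∀ (X : Fin n → Type) (_ : ∀ i, MetricSpace (X i)),
      (∀ i, IsLengthSpaceWith (fun a b : X i => dist a b)) →
      IsLengthSpaceWith (fun x y : ∀ i, X i => Φ (fun i => dist (x i) (y i)))) :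
    ∀ i : Fin n, ∀ ε > (0 : ℝ), ∃ δ > (0 : ℝ), ∀ t : ℝ, 0 < t → t < δ →
      Φ (Pi.single i t) < ε := by
  intro i ε hε
  obtain ⟨a, ha, hΦa⟩ := exists_pos_map_single_lt hlen i (half_pos hε)
  refine ⟨2 * a, by positivity, fun t ht hta => ?_⟩
  have := map_single_le_add hB i ht.le ha.le ha.le (by linarith) (by linarith) (by linarith)
  linarith

/-- If `Φ` satisfies (A), (B) and `d_Φ` turns the product of any
`n` length spaces into a length space, then `Φ` is continuous at `0` along each
coordinate ray. -/
theorem stmt_12 {n : ℕ} (Φ : (Fin n → ℝ) → ℝ)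
    (hA : ∀ q : Fin n → ℝ, 0 ≤ q → (0 ≤ Φ q ∧ (Φ q = 0 ↔ q = 0)))
    (hB : ∀ q1 q2 q3 : Fin n → ℝ, 0 ≤ q1 → 0 ≤ q2 → 0 ≤ q3 →
      q1 ≤ q2 + q3 → q2 ≤ q1 + q3 → q3 ≤ q1 + q2 →
      Φ q1 ≤ Φ q2 + Φ q3)
    (hlen : ∀ (X : Fin n → Type) (_ : ∀ i, MetricSpace (X i)),
      (∀ i, IsLengthSpaceWith (fun a b : X i => dist a b)) →
      IsLengthSpaceWith (fun x y : ∀ i, X i => Φ (fun i => dist (x i) (y i)))) :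
    ∀ i : Fin n, ∀ ε > (0 : ℝ), ∃ δ > (0 : ℝ), ∀ t : ℝ, 0 < t → t < δ →
      Φ (Pi.single i t) < ε :=
  stmt_12_general Φ hB hlen
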